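/- A real cubic binary form f(x,y) of degree 3 without multiple complex roots has real Waring rank 3 if and only if it has 3 distinct real roots; otherwise (one real and two complex conjugate roots) it has real Waring rank 2. -/

import Mathlib

open MvPolynomial

/-- The real linear binary form `p.1 * x + p.2 * y`. -/
noncomputable def lin (p : ℝ × ℝ) : MvPolynomial (Fin 2) ℝ :=
  C p.1 * X 0 + C p.2 * X 1

/-- A binary form `f` has `m` distinct real roots: it factors over `ℝ` into `m`
pairwise non-proportional (nonzero) real linear forms, up to a nonzero constant. -/
noncomputable def HasDistinctRealRoots (f : MvPolynomial (Fin 2) ℝ) (m : ℕ) : Prop :=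
  ∃ (c : ℝ) (l : Fin m → ℝ × ℝ), c ≠ 0 ∧ (∀ i, l i ≠ 0) ∧
    (∀ i j, i ≠ j → (l i).1 * (l j).2 - (l j).1 * (l i).2 ≠ 0) ∧
    f = C c * ∏ i, lin (l i)
/-- `f` admits a real Waring decomposition with `r` summands of `n`-th powers of
real linear forms. -/
noncomputable def WaringDecomp (f : MvPolynomial (Fin 2) ℝ) (n r : ℕ) : Prop :=
  ∃ (lam : Fin r → ℝ) (l : Fin r → ℝ × ℝ),
    f = ∑ i, C (lam i) * (lin (l i)) ^ n

/-- The real Waring rank of a binary form of degree `n`. -/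
noncomputable def RealRank (f : MvPolynomial (Fin 2) ℝ) (n : ℕ) : ℕ :=
  sInf {r | WaringDecomp f n r}

/-! Split off a real linear factor `u` of `f` (a real cubic has a real root) and complete it to
coordinates `u, w`, so that `f = u (a u² + b u w + c w²)`. If `b² - 4ac ≥ 0` the quadratic
factor splits over `ℝ`, so `f` is a product of three real linear forms, pairwise independent
because `f` is squarefree. If `b² - 4ac < 0`, an explicit identity writes `f` as a sum of two
cubes.

Conversely, if `f = c l₀ l₁ l₂` with independent factors, then `l₂` is a combination
`a l₀ + b l₁` and `3 x y (x + y) = (x + y)³ - x³ - y³` gives three cubes; but a sum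
`λ₀ m₀³ + λ₁ m₁³` of two cubes of independent forms vanishes at only one point of the real
projective line, since cubing is injective on `ℝ`. Squarefreeness rules out fewer than two
cubes. -/

theorem Polynomial.exists_isRoot_of_odd_natDegree_real {P : Polynomial ℝ} (hP : Odd P.natDegree) :
    ∃ x, P.IsRoot x := by
  wlog hlc : 0 < P.leadingCoeff generalizing P
  · have hP0 : P.leadingCoeff ≠ 0 := by
      rw [Ne, Polynomial.leadingCoeff_eq_zero]; rintro rfl; simp at hP
    obtain ⟨x, hx⟩ := this (P := -P) (by rwa [Polynomial.natDegree_neg])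
      (by rw [Polynomial.leadingCoeff_neg]; exact neg_pos.2 (lt_of_le_of_ne (not_lt.1 hlc) hP0))
    exact ⟨x, by simpa using hx⟩
  have hdeg : 0 < P.degree := Polynomial.natDegree_pos_iff_degree_pos.mp hP.pos
  obtain ⟨x, hx⟩ :=
    ((P.tendsto_atTop_of_leadingCoeff_nonneg hdeg hlc.le).eventually_ge_atTop 0).exists
  obtain ⟨y, hy⟩ := (((P.comp (-Polynomial.X)).tendsto_atBot_of_leadingCoeff_nonpos
    (by rwa [Polynomial.degree_comp_neg_X])
    (by simp [hP.neg_one_pow, hlc.le])).eventually_le_atBot 0).exists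
  obtain ⟨z, hz⟩ := intermediate_value_univ (-y) x P.continuous ⟨by simpa using hy, hx⟩
  exact ⟨z, hz⟩

theorem MvPolynomial.IsHomogeneous.eq_sum_range_fin_two {R : Type*} [CommSemiring R]
    {f : MvPolynomial (Fin 2) R} {n : ℕ} (hf : f.IsHomogeneous n) :
    f = ∑ i ∈ Finset.range (n + 1),
      C (coeff (Finsupp.single 0 i + Finsupp.single 1 (n - i)) f) * X 0 ^ i * X 1 ^ (n - i) := by
  set e : ℕ → Fin 2 →₀ ℕ := fun i => Finsupp.single 0 i + Finsupp.single 1 (n - i)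
  have he : Set.InjOn e (Finset.range (n + 1)) := fun i _ j _ hij => by
    simpa [e] using DFunLike.congr_fun hij 0
  have hsupp : f.support ⊆ (Finset.range (n + 1)).image e := by
    intro m hm
    have hdeg : m 0 + m 1 = n := by
      rw [← hf (mem_support_iff.mp hm), Finsupp.weight_apply, Finsupp.sum_fintype _ _ (by simp),
        Fin.sum_univ_two]
      simp
    refine Finset.mem_image.mpr ⟨m 0, Finset.mem_range.mpr (by omega), ?_⟩
    simp only [e, show n - m 0 = m 1 by omega]
    ext i
    fin_cases i <;> simp
  calc f = ∑ m ∈ (Finset.range (n + 1)).image e, monomial m (coeff m f) :=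
        (f.support_sum_monomial_coeff).symm.trans <|
          Finset.sum_subset hsupp fun m _ hm => by simp [notMem_support_iff.mp hm]
    _ = _ := by
        rw [Finset.sum_image he]
        refine Finset.sum_congr rfl fun i _ => ?_
        rw [mul_assoc, X_pow_eq_monomial, X_pow_eq_monomial, monomial_mul, C_mul_monomial,
          one_mul, mul_one]

def cross (p q : ℝ × ℝ) : ℝ := p.1 * q.2 - q.1 * p.2

@[simp]
lemma eval_lin (x : Fin 2 → ℝ) (p : ℝ × ℝ) : eval x (lin p) = p.1 * x 0 + p.2 * x 1 := by
  simp [lin]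

lemma lin_smul (k : ℝ) (p : ℝ × ℝ) : lin (k • p) = C k * lin p := by
  simp only [lin, Prod.smul_fst, Prod.smul_snd, smul_eq_mul, map_mul]
  ring

lemma exists_smul_of_cross_eq_zero {p q : ℝ × ℝ} (h : cross p q = 0) :
    ∃ k : ℝ, q = k • p ∨ p = k • q := by
  by_cases hp : p = 0
  · exact ⟨0, Or.inr (by simp [hp])⟩
  unfold cross at h
  rcases ne_or_eq p.1 0 with h1 | h1
  · refine ⟨q.1 / p.1, Or.inl (Prod.ext (by simp [h1]) ?_)⟩
    simp only [Prod.smul_snd, smul_eq_mul]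
    field_simp
    linarith
  · have h2 : p.2 ≠ 0 := fun h2 => hp (Prod.ext h1 h2)
    refine ⟨q.2 / p.2, Or.inl (Prod.ext ?_ (by simp [h2]))⟩
    simp only [Prod.smul_fst, smul_eq_mul, h1]
    field_simp
    simpa [h1] using h

lemma exists_lin_mul_quadratic {f : MvPolynomial (Fin 2) ℝ} (hf : f.IsHomogeneous 3) :
    ∃ (p q : ℝ × ℝ) (a b c : ℝ),
      f = lin p * (C a * lin p ^ 2 + C b * (lin p * lin q) + C c * lin q ^ 2) := by
  obtain ⟨d, c, b, a, hf⟩ : ∃ d c b a : ℝ,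
      f = C d * X 1 ^ 3 + C c * X 0 * X 1 ^ 2 + C b * X 0 ^ 2 * X 1 + C a * X 0 ^ 3 := by
    have h := hf.eq_sum_range_fin_two
    simp only [Finset.sum_range_succ, Finset.range_one, Finset.sum_singleton, Nat.reduceAdd,
      Nat.reduceSub, Nat.add_one_sub_one, tsub_zero, tsub_self, Finsupp.single_zero, zero_add,
      add_zero, pow_zero, pow_one, mul_one] at h
    exact ⟨_, _, _, _, h⟩
  subst hf
  by_cases ha : a = 0
  · refine ⟨(0, 1), (1, 0), d, c, b, funext fun x => ?_⟩
    simp only [ha, map_zero, map_add, map_mul, map_pow, eval_C, eval_X, eval_lin]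
    ring
  -- A real root `t` of `f(t, 1)` gives the linear factor `X 0 - t X 1`.
  obtain ⟨t, ht⟩ := Polynomial.exists_isRoot_of_odd_natDegree_real
    (P := .C a * .X ^ 3 + .C b * .X ^ 2 + .C c * .X + .C d)
    (by rw [Polynomial.natDegree_cubic ha]; decide)
  simp only [Polynomial.IsRoot.def, Polynomial.eval_add, Polynomial.eval_mul, Polynomial.eval_C,
    Polynomial.eval_pow, Polynomial.eval_X] at ht
  refine ⟨(1, -t), (0, 1), a, 3 * a * t + b, 3 * a * t ^ 2 + 2 * b * t + c, funext fun x => ?_⟩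
  simp only [map_add, map_mul, map_pow, eval_C, eval_X, eval_lin]
  linear_combination x 1 ^ 3 * ht

section SquarefreeForm

variable {f : MvPolynomial (Fin 2) ℝ} (hsf : Squarefree (MvPolynomial.map (algebraMap ℝ ℂ) f))
include hsf

lemma ne_zero_of_squarefree_map : f ≠ 0 := by
  rintro rfl
  simp at hsf

lemma not_lin_sq_dvd (p : ℝ × ℝ) : ¬ lin p ^ 2 ∣ f := by
  intro h
  have hu : IsUnit (MvPolynomial.map (algebraMap ℝ ℂ) (lin p)) :=
    hsf _ (by simpa [sq] using map_dvd (MvPolynomial.map (algebraMap ℝ ℂ)) h)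
  apply (hu.map (eval ![(p.2 : ℂ), -p.1])).ne_zero
  simp only [lin, map_add, map_mul, map_C, Complex.coe_algebraMap, map_X, eval_C, eval_X,
    Matrix.cons_val_zero, Matrix.cons_val_one]
  ring

lemma cross_ne_zero_of_lin_mul_lin_dvd {p q : ℝ × ℝ} (h : lin p * lin q ∣ f) :
    cross p q ≠ 0 := by
  intro hpq
  obtain ⟨k, rfl | rfl⟩ := exists_smul_of_cross_eq_zero hpq
  · rw [lin_smul, mul_left_comm, ← sq] at h
    exact not_lin_sq_dvd hsf p (dvd_of_mul_left_dvd h)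
  · rw [lin_smul, mul_assoc, ← sq] at h
    exact not_lin_sq_dvd hsf q (dvd_of_mul_left_dvd h)

lemma hasDistinctRealRoots_of_eq_prod {m : ℕ} {c : ℝ} {l : Fin m → ℝ × ℝ}
    (hf : f = C c * ∏ i, lin (l i)) : HasDistinctRealRoots f m := by
  classical
  have hf0 := ne_zero_of_squarefree_map hsf
  refine ⟨c, l, ?_, fun i hi => ?_, fun i j hij => ?_, hf⟩
  · rintro rfl
    simp [hf] at hf0
  · refine hf0 (hf ▸ mul_eq_zero_of_right _ (Finset.prod_eq_zero (Finset.mem_univ i) ?_))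
    simp [hi, lin]
  · refine cross_ne_zero_of_lin_mul_lin_dvd hsf (hf ▸ Dvd.dvd.mul_left ?_ _)
    rw [← Finset.prod_pair (f := fun k => lin (l k)) hij]
    exact Finset.prod_dvd_prod_of_subset _ _ _ (Finset.subset_univ _)

lemma hasDistinctRealRoots_of_discrim_nonneg {p q : ℝ × ℝ} {a b c : ℝ}
    (hf : f = lin p * (C a * lin p ^ 2 + C b * (lin p * lin q) + C c * lin q ^ 2))
    (h : 0 ≤ discrim a b c) : HasDistinctRealRoots f 3 := by
  obtain ⟨s, hs⟩ : ∃ s, discrim a b c = s * s := ⟨√_, (Real.mul_self_sqrt h).symm⟩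
  rw [discrim] at hs
  by_cases ha : a = 0
  · refine hasDistinctRealRoots_of_eq_prod hsf (c := 1) (l := ![p, q, b • p + c • q]) ?_
    rw [hf]
    refine funext fun x => ?_
    simp only [ha, map_zero, map_one, zero_mul, zero_add, one_mul, map_add, map_mul, map_pow,
      eval_C, eval_lin, Fin.prod_univ_three,
      Matrix.cons_val_zero, Matrix.cons_val_one, Matrix.cons_val, Prod.fst_add, Prod.snd_add,
      Prod.smul_fst, Prod.smul_snd, smul_eq_mul]
    ring
  · refine hasDistinctRealRoots_of_eq_prod hsf (c := (4 * a)⁻¹)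
      (l := ![p, (2 * a) • p + (b + s) • q, (2 * a) • p + (b - s) • q]) ?_
    rw [hf]
    refine funext fun x => ?_
    simp only [map_add, map_mul, map_pow, eval_C, eval_lin, Fin.prod_univ_three,
      Matrix.cons_val_zero, Matrix.cons_val_one, Matrix.cons_val, Prod.fst_add, Prod.snd_add,
      Prod.smul_fst, Prod.smul_snd, smul_eq_mul]
    field_simp
    linear_combination -(p.1 * x 0 + p.2 * x 1) * (q.1 * x 0 + q.2 * x 1) ^ 2 * hs

lemma not_waringDecomp_of_lt_two {n r : ℕ} (hn : 2 ≤ n) (hr : r < 2) : ¬ WaringDecomp f n r := by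
  rintro ⟨lam, l, hf⟩
  interval_cases r
  · exact ne_zero_of_squarefree_map hsf (by simpa using hf)
  · refine not_lin_sq_dvd hsf (l 0) ?_
    rw [hf, Fin.sum_univ_one]
    exact Dvd.dvd.mul_left (pow_dvd_pow _ hn) _

end SquarefreeForm

lemma waringDecomp_two_of_discrim_neg {f : MvPolynomial (Fin 2) ℝ} {p q : ℝ × ℝ} {a b c : ℝ}
    (hf : f = lin p * (C a * lin p ^ 2 + C b * (lin p * lin q) + C c * lin q ^ 2))
    (h : discrim a b c < 0) : WaringDecomp f 3 2 := by
  rw [discrim] at h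
  have hc : c ≠ 0 := by
    rintro rfl
    nlinarith [sq_nonneg b]
  obtain ⟨r, hr0, hr⟩ : ∃ r : ℝ, 0 < r ∧ r ^ 2 = 12 * a * c - 3 * b ^ 2 :=
    ⟨√(12 * a * c - 3 * b ^ 2), Real.sqrt_pos.2 (by linarith), Real.sq_sqrt (by linarith)⟩
  -- With `u = lin p`, `w = lin q`, `x = (r + b) u + 2 c w`, `y = (r - b) u - 2 c w` one has
  -- `x + y = 2 r u` and `x² - x y + y² = 12 c (a u² + b u w + c w²)`.
  refine ⟨fun _ => (24 * r * c)⁻¹, ![(r + b) • p + (2 * c) • q, (r - b) • p - (2 * c) • q], ?_⟩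
  rw [hf]
  refine funext fun x => ?_
  simp only [map_add, map_mul, map_pow, eval_C, eval_lin, Fin.sum_univ_two,
    Matrix.cons_val_zero, Matrix.cons_val_one, Prod.fst_add, Prod.snd_add, Prod.fst_sub,
    Prod.snd_sub, Prod.smul_fst, Prod.smul_snd, smul_eq_mul]
  field_simp
  linear_combination (-2 * r * (p.1 * x 0 + p.2 * x 1) ^ 3) * hr

lemma waringDecomp_three_of_hasDistinctRealRoots {f : MvPolynomial (Fin 2) ℝ}
    (h : HasDistinctRealRoots f 3) : WaringDecomp f 3 3 := by
  obtain ⟨c, l, -, -, hl, hf⟩ := h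
  set a := cross (l 2) (l 1)
  set b := cross (l 0) (l 2)
  set d := cross (l 0) (l 1)
  have ha : a ≠ 0 := hl 2 1 (by decide)
  have hb : b ≠ 0 := hl 0 2 (by decide)
  have hd : d ≠ 0 := hl 0 1 (by decide)
  -- `d • l 2 = a • l 0 + b • l 1` (Cramer), and `3 x y (x + y) = (x + y)³ - x³ - y³`.
  refine ⟨fun i => ![1, -1, -1] i * (c / (3 * a * b * d)), ![d • l 2, a • l 0, b • l 1], ?_⟩
  rw [hf]
  refine funext fun x => ?_
  simp only [map_add, map_mul, map_pow, eval_C, eval_lin, Fin.sum_univ_three, Fin.prod_univ_three,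
    Matrix.cons_val_zero, Matrix.cons_val_one, Matrix.cons_val, Prod.smul_fst, Prod.smul_snd,
    smul_eq_mul]
  field_simp
  simp only [a, b, d, cross]
  ring

lemma waringDecomp_one_of_cross_eq_zero {f : MvPolynomial (Fin 2) ℝ} {n : ℕ} {a b : ℝ}
    {p q : ℝ × ℝ} (hf : f = C a * lin p ^ n + C b * lin q ^ n) (h : cross p q = 0) :
    WaringDecomp f n 1 := by
  obtain ⟨k, rfl | rfl⟩ := exists_smul_of_cross_eq_zero h
  · refine ⟨fun _ => a + b * k ^ n, fun _ => p, ?_⟩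
    rw [hf, Fin.sum_univ_one, lin_smul]
    simp only [map_add, map_mul, map_pow]
    ring
  · refine ⟨fun _ => a * k ^ n + b, fun _ => q, ?_⟩
    rw [hf, Fin.sum_univ_one, lin_smul]
    simp only [map_add, map_mul, map_pow]
    ring

lemma cross_mul_eq_zero_of_eval_eq_zero {a b : ℝ} {p q : ℝ × ℝ} {x y : Fin 2 → ℝ} (ha : a ≠ 0)
    (hx : eval x (C a * lin p ^ 3 + C b * lin q ^ 3) = 0)
    (hy : eval y (C a * lin p ^ 3 + C b * lin q ^ 3) = 0) :
    cross p q * (x 0 * y 1 - y 0 * x 1) = 0 := by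
  simp only [map_add, map_mul, map_pow, eval_C, eval_lin] at hx hy
  set s := p.1 * x 0 + p.2 * x 1
  set t := q.1 * x 0 + q.2 * x 1
  set s' := p.1 * y 0 + p.2 * y 1
  set t' := q.1 * y 0 + q.2 * y 1
  have hcube : (s * t') ^ 3 = (s' * t) ^ 3 :=
    mul_left_cancel₀ ha (by linear_combination t' ^ 3 * hx - t ^ 3 * hy)
  have : s * t' = s' * t := (Odd.strictMono_pow (by decide : Odd 3)).injective hcube
  unfold cross
  linear_combination this

lemma not_waringDecomp_two_of_hasDistinctRealRoots {f : MvPolynomial (Fin 2) ℝ}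
    (hsf : Squarefree (MvPolynomial.map (algebraMap ℝ ℂ) f)) (h : HasDistinctRealRoots f 3) :
    ¬ WaringDecomp f 3 2 := by
  rintro ⟨lam, m, hf⟩
  rw [Fin.sum_univ_two] at hf
  have h1 : ¬ WaringDecomp f 3 1 := not_waringDecomp_of_lt_two hsf (by norm_num) (by norm_num)
  obtain ⟨c, k, -, -, hk, hfk⟩ := h
  have hroot (i : Fin 3) : eval ![(k i).2, -(k i).1] f = 0 := by
    rw [hfk, map_mul, map_prod]
    refine mul_eq_zero_of_right _ (Finset.prod_eq_zero (Finset.mem_univ i) ?_)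
    simp only [eval_lin, Matrix.cons_val_zero, Matrix.cons_val_one]
    ring
  by_cases hlam : lam 0 = 0
  · exact h1 ⟨fun _ => lam 1, fun _ => m 1, by simp [hf, hlam]⟩
  by_cases hm : cross (m 0) (m 1) = 0
  · exact h1 (waringDecomp_one_of_cross_eq_zero hf hm)
  have := cross_mul_eq_zero_of_eval_eq_zero hlam (hf ▸ hroot 0) (hf ▸ hroot 1)
  simp only [Matrix.cons_val_zero, Matrix.cons_val_one] at this
  exact mul_ne_zero hm (hk 0 1 (by decide)) (by linear_combination this)

lemma waringDecomp_two_of_not_hasDistinctRealRoots {f : MvPolynomial (Fin 2) ℝ}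
    (hhom : f.IsHomogeneous 3) (hsf : Squarefree (MvPolynomial.map (algebraMap ℝ ℂ) f))
    (hnd : ¬ HasDistinctRealRoots f 3) : WaringDecomp f 3 2 := by
  obtain ⟨p, q, a, b, c, hf⟩ := exists_lin_mul_quadratic hhom
  rcases lt_or_ge (discrim a b c) 0 with h | h
  · exact waringDecomp_two_of_discrim_neg hf h
  · exact absurd (hasDistinctRealRoots_of_discrim_nonneg hsf hf h) hnd

lemma realRank_eq {f : MvPolynomial (Fin 2) ℝ} {n r : ℕ} (h : WaringDecomp f n r)
    (hlt : ∀ m < r, ¬ WaringDecomp f n m) : RealRank f n = r :=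
  le_antisymm (Nat.sInf_le h) (le_csInf ⟨r, h⟩ fun m hm => not_lt.1 fun hmr => hlt m hmr hm)

theorem stmt_19 (f : MvPolynomial (Fin 2) ℝ)
    (hhom : f.IsHomogeneous 3)
    (hsf : Squarefree (MvPolynomial.map (algebraMap ℝ ℂ) f)) :
    (RealRank f 3 = 3 ↔ HasDistinctRealRoots f 3) ∧
    (¬ HasDistinctRealRoots f 3 → RealRank f 3 = 2) := by
  have hlow : ∀ m < 2, ¬ WaringDecomp f 3 m := fun m hm =>
    not_waringDecomp_of_lt_two hsf (by norm_num) hm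
  have hrank2 (hnd : ¬ HasDistinctRealRoots f 3) : RealRank f 3 = 2 :=
    realRank_eq (waringDecomp_two_of_not_hasDistinctRealRoots hhom hsf hnd) hlow
  refine ⟨⟨fun h3 => by_contra fun hnd => by simp [hrank2 hnd] at h3, fun hd => ?_⟩, hrank2⟩
  refine realRank_eq (waringDecomp_three_of_hasDistinctRealRoots hd) fun m hm => ?_
  rcases Nat.lt_succ_iff_lt_or_eq.1 hm with hm | rfl
  · exact hlow m hm
  · exact not_waringDecomp_two_of_hasDistinctRealRoots hsf hd
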